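/- (Gevrey commutator estimate) Let r ≥ 0, s₁ > 3/2, s > 1/2 and 0 ≤ δ ≤ 1. There exists C such that ‖(f ∂_x g)_Φ − f ∂_x g_Φ‖_{H^r(𝕋)} ≤ C |f|_{X^{s₁}} |g|_{X^{r+2/3}} + C |f|_{X^{r+1-δ}} |g|_{X^{s+δ}}, where h_Φ has Fourier coefficients e^{τ⟨k⟩^{2/3}} ĥ(k) and |h|_{X^a} = ‖h_Φ‖_{H^a(𝕋)}. -/

import Mathlib

/-- Japanese bracket `⟨k⟩ = (1+k²)^(1/2)` for `k : ℤ`. -/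
noncomputable def jap (k : ℤ) : ℝ := Real.sqrt (1 + (k : ℝ) ^ 2)

/-- The Gevrey `X^r` norm with weight `e^{τ⟨k⟩^(2/3)}` of Fourier coefficients. -/
noncomputable def Xnorm (τ r : ℝ) (f : ℤ → ℂ) : ℝ :=
  Real.sqrt (∑' k : ℤ,
    (jap k ^ r * Real.exp (τ * jap k ^ ((2 : ℝ) / 3)) * ‖f k‖) ^ 2)

/-- Fourier coefficients of the Gevrey commutator `(f ∂_x g)_Φ − f ∂_x g_Φ`. -/
noncomputable def gevreyCommCoef (τ : ℝ) (f g : ℤ → ℂ) (k : ℤ) : ℂ :=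
  ∑' ℓ : ℤ, ((Real.exp (τ * jap k ^ ((2 : ℝ) / 3)) -
      Real.exp (τ * jap ℓ ^ ((2 : ℝ) / 3)) : ℝ) : ℂ) *
    f (k - ℓ) * (Complex.I * (ℓ : ℂ)) * g ℓ

/-!
Write `Φ(k) = τ⟨k⟩^(2/3)`, so that the `k`-th coefficient of the commutator is
`∑_ℓ (e^{Φ(k)} - e^{Φ(ℓ)}) f̂(k-ℓ) iℓ ĝ(ℓ)`, and split the sum according to which of `k - ℓ`, `ℓ`
carries the larger bracket.

If `⟨k-ℓ⟩ ≤ ⟨ℓ⟩`, the derivative falls on the high frequency. Concavity of `t ↦ t^(2/3)` gives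
`|Φ(k) - Φ(ℓ)| ≤ τ⟨k-ℓ⟩⟨ℓ⟩^(-1/3)` and `Φ(k) ≤ Φ(ℓ) + (2/3)Φ(k-ℓ)`; the spare factor
`e^{Φ(k-ℓ)/3}` absorbs `Φ(k-ℓ)`, so the symbol costs only `⟨k-ℓ⟩^(1/3)⟨ℓ⟩^(2/3)`, i.e. `2/3` of a
derivative on `g`. If `⟨ℓ⟩ ≤ ⟨k-ℓ⟩`, subadditivity of `Φ` bounds the symbol by
`e^{Φ(k-ℓ)}e^{Φ(ℓ)}|ℓ|`, and `|ℓ| ≤ ⟨ℓ⟩^δ⟨k-ℓ⟩^(1-δ)` moves `1 - δ` derivatives onto `f`.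

Each piece is then a convolution of an `ℓ¹` sequence with an `ℓ²` sequence, which Young's and
Cauchy–Schwarz's inequalities bound, the `ℓ¹` norms being controlled because
`⟨·⟩^(1/3 - s₁)` and `⟨·⟩^(-s)` are square summable.
-/

open Real

section Rpow

variable {p a b : ℝ}

theorem Real.rpow_add_le_rpow_add_mul_rpow (hp0 : 0 ≤ p) (hp1 : p ≤ 1) (ha : 0 ≤ a)
    (hab : a ≤ b) : (a + b) ^ p ≤ b ^ p + p * a ^ p := by
  rcases ha.eq_or_lt with rfl | ha
  · simp only [zero_add, le_add_iff_nonneg_right]; positivity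
  have hb : 0 < b := ha.trans_le hab
  calc (a + b) ^ p = b ^ p * (1 + a / b) ^ p := by
        rw [← Real.mul_rpow hb.le (by positivity), mul_add, mul_div_cancel₀ _ hb.ne', mul_one,
          add_comm]
    _ ≤ b ^ p * (1 + p * (a / b)) := by
        gcongr
        exact rpow_one_add_le_one_add_mul_self (by linarith [div_nonneg ha.le hb.le]) hp0 hp1
    _ = b ^ p + p * (a * b ^ (p - 1)) := by
        rw [Real.rpow_sub_one hb.ne']; field_simp
    _ ≤ b ^ p + p * (a * a ^ (p - 1)) := by
        gcongr b ^ p + p * (a * ?_)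
        exact Real.rpow_le_rpow_of_nonpos ha hab (sub_nonpos.2 hp1)
    _ = b ^ p + p * a ^ p := by
        rw [Real.rpow_sub_one ha.ne']; field_simp

theorem Real.rpow_sub_rpow_mul_rpow_le (hp1 : p ≤ 1) (hb : 0 < b) (hba : b ≤ a) :
    (a ^ p - b ^ p) * a ^ (1 - p) ≤ a - b := by
  have ha : 0 < a := hb.trans_le hba
  have hb' : b ≤ b ^ p * a ^ (1 - p) := calc
    b = b ^ p * b ^ (1 - p) := by rw [← Real.rpow_add hb, add_sub_cancel, Real.rpow_one]
    _ ≤ b ^ p * a ^ (1 - p) := by gcongr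
  have ha' : a ^ p * a ^ (1 - p) = a := by
    rw [← Real.rpow_add ha, add_sub_cancel, Real.rpow_one]
  linarith

theorem Real.abs_rpow_sub_rpow_mul_rpow_le (hp0 : 0 ≤ p) (hp1 : p ≤ 1) (ha : 0 < a) (hb : 0 < b) :
    |a ^ p - b ^ p| * b ^ (1 - p) ≤ |a - b| := by
  rcases le_total b a with hba | hab
  · calc |a ^ p - b ^ p| * b ^ (1 - p) ≤ (a ^ p - b ^ p) * a ^ (1 - p) := by
          rw [abs_of_nonneg (sub_nonneg.2 (by gcongr))]
          gcongr
          exact sub_nonneg.2 (by gcongr)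
      _ ≤ a - b := rpow_sub_rpow_mul_rpow_le hp1 hb hba
      _ ≤ |a - b| := le_abs_self _
  · rw [abs_sub_comm, abs_sub_comm a]
    calc |b ^ p - a ^ p| * b ^ (1 - p) = (b ^ p - a ^ p) * b ^ (1 - p) := by
          rw [abs_of_nonneg (sub_nonneg.2 (by gcongr))]
      _ ≤ b - a := rpow_sub_rpow_mul_rpow_le hp1 ha hab
      _ ≤ |b - a| := le_abs_self _

theorem Real.rpow_le_two_rpow_mul_rpow {x y z : ℝ} (hx : 0 ≤ x) (hp : 0 ≤ p) (hxyz : x ≤ y + z)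
    (hyz : y ≤ z) : x ^ p ≤ 2 ^ p * z ^ p := by
  rw [← mul_rpow zero_le_two (by linarith)]
  gcongr
  linarith

end Rpow

theorem Real.abs_exp_sub_exp_le_mul_exp_max (x y : ℝ) :
    |exp x - exp y| ≤ |x - y| * exp (max x y) := by
  wlog hyx : y ≤ x generalizing x y
  · rw [abs_sub_comm, abs_sub_comm x, max_comm]; exact this y x (by linarith)
  rw [abs_of_nonneg (sub_nonneg.2 (exp_le_exp.2 hyx)), abs_of_nonneg (sub_nonneg.2 hyx),
    max_eq_left hyx]
  have := add_one_le_exp (y - x)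
  have : exp x * exp (y - x) = exp y := by rw [← exp_add]; ring_nf
  nlinarith [exp_pos x]

theorem Real.abs_exp_sub_exp_le_exp_max (x y : ℝ) : |exp x - exp y| ≤ exp (max x y) := by
  have := exp_le_exp.2 (le_max_left x y)
  have := exp_le_exp.2 (le_max_right x y)
  rw [abs_sub_le_iff]
  constructor <;> linarith [exp_pos x, exp_pos y]

theorem Real.mul_exp_mul_le_exp (θ x : ℝ) (hθ : θ < 1) : x * exp (θ * x) ≤ exp x / (1 - θ) := by
  rw [le_div_iff₀ (by linarith)]
  have := add_one_le_exp ((1 - θ) * x)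
  have : exp (θ * x) * exp ((1 - θ) * x) = exp x := by rw [← exp_add]; ring_nf
  nlinarith [exp_pos (θ * x)]

theorem Real.sqrt_le_sqrt_two_mul_add {S x y : ℝ} (hx : 0 ≤ x) (hy : 0 ≤ y)
    (h : S ≤ 2 * (x ^ 2 + y ^ 2)) : √S ≤ √2 * (x + y) := by
  rw [sqrt_le_left (by positivity), mul_pow, sq_sqrt zero_le_two]
  nlinarith [mul_nonneg hx hy]

section Convolution

open scoped ENNReal
open MeasureTheory

variable {α : Type*}

theorem ENNReal.add_sq_le (a b : ℝ≥0∞) : (a + b) ^ 2 ≤ 2 * (a ^ 2 + b ^ 2) := by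
  have h := ENNReal.rpow_add_le_mul_rpow_add_rpow a b one_le_two
  norm_num [ENNReal.rpow_two] at h
  exact h

theorem ENNReal.tsum_mul_sq_le_sq_mul_sq (a b : α → ℝ≥0∞) :
    (∑' i, a i * b i) ^ 2 ≤ (∑' i, a i ^ 2) * ∑' i, b i ^ 2 := by
  let _ : MeasurableSpace α := ⊤
  have h := ENNReal.lintegral_mul_le_Lp_mul_Lq Measure.count Real.HolderConjugate.two_two
    (measurable_from_top (f := a)).aemeasurable (measurable_from_top (f := b)).aemeasurable
  simp only [Pi.mul_apply, lintegral_count, ENNReal.rpow_two] at h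
  calc (∑' i, a i * b i) ^ 2
      ≤ ((∑' i, a i ^ 2) ^ (1 / 2 : ℝ) * (∑' i, b i ^ 2) ^ (1 / 2 : ℝ)) ^ 2 := by gcongr
    _ = _ := by
      rw [mul_pow, ← ENNReal.rpow_natCast, ← ENNReal.rpow_natCast, ← ENNReal.rpow_mul,
        ← ENNReal.rpow_mul]
      norm_num

theorem ENNReal.tsum_mul_sq_le_tsum_mul_tsum_mul_sq (w G : α → ℝ≥0∞) :
    (∑' i, w i * G i) ^ 2 ≤ (∑' i, w i) * ∑' i, w i * G i ^ 2 := by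
  have hw : ∀ i, (w i ^ (2⁻¹ : ℝ)) ^ 2 = w i := fun i => by
    simpa using ENNReal.rpow_inv_natCast_pow two_ne_zero (w i)
  calc (∑' i, w i * G i) ^ 2 = (∑' i, w i ^ (2⁻¹ : ℝ) * (w i ^ (2⁻¹ : ℝ) * G i)) ^ 2 := by
        simp_rw [← mul_assoc, ← sq, hw]
    _ ≤ _ := ENNReal.tsum_mul_sq_le_sq_mul_sq _ _
    _ = _ := by simp only [mul_pow, hw]

theorem ENNReal.tsum_ofReal_sq {w : α → ℝ} (hw : ∀ i, 0 ≤ w i) (hs : Summable fun i => w i ^ 2) :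
    ∑' i, ENNReal.ofReal (w i) ^ 2 = ENNReal.ofReal (√(∑' i, w i ^ 2)) ^ 2 := by
  rw [← ENNReal.ofReal_pow (sqrt_nonneg _), sq_sqrt (tsum_nonneg fun i => sq_nonneg _),
    ENNReal.ofReal_tsum_of_nonneg (fun i => sq_nonneg _) hs]
  simp_rw [ENNReal.ofReal_pow (hw _)]

theorem ENNReal.toReal_tsum_ofReal_sq {w : α → ℝ} (hw : ∀ i, 0 ≤ w i) :
    (∑' i, ENNReal.ofReal (w i) ^ 2).toReal = ∑' i, w i ^ 2 := by
  rw [ENNReal.tsum_toReal_eq fun i => by finiteness]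
  simp_rw [ENNReal.toReal_pow, ENNReal.toReal_ofReal (hw _)]

section AddGroup

variable [AddGroup α]

theorem ENNReal.tsum_sq_tsum_sub_mul_le (h G : α → ℝ≥0∞) :
    ∑' k, (∑' ℓ, h (k - ℓ) * G ℓ) ^ 2 ≤ (∑' j, h j) ^ 2 * ∑' ℓ, G ℓ ^ 2 := by
  have hrow : ∀ k, ∑' ℓ, h (k - ℓ) = ∑' j, h j := fun k => (Equiv.subLeft k).tsum_eq h
  have hcol : ∀ ℓ, ∑' k, h (k - ℓ) = ∑' j, h j := fun ℓ => (Equiv.subRight ℓ).tsum_eq h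
  calc ∑' k, (∑' ℓ, h (k - ℓ) * G ℓ) ^ 2
      ≤ ∑' k, (∑' j, h j) * ∑' ℓ, h (k - ℓ) * G ℓ ^ 2 := ENNReal.tsum_le_tsum fun k => by
        rw [← hrow k]; exact ENNReal.tsum_mul_sq_le_tsum_mul_tsum_mul_sq _ _
    _ = (∑' j, h j) * ∑' ℓ, (∑' k, h (k - ℓ)) * G ℓ ^ 2 := by
        rw [ENNReal.tsum_mul_left, ENNReal.tsum_comm]; simp_rw [ENNReal.tsum_mul_right]
    _ = _ := by simp_rw [hcol, ENNReal.tsum_mul_left]; ring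

end AddGroup

variable [AddCommGroup α]

theorem ENNReal.tsum_sq_tsum_mul_sub_le (F w : α → ℝ≥0∞) :
    ∑' k, (∑' ℓ, F (k - ℓ) * w ℓ) ^ 2 ≤ (∑' j, w j) ^ 2 * ∑' ℓ, F ℓ ^ 2 := by
  have hcomm : ∀ k, ∑' ℓ, F (k - ℓ) * w ℓ = ∑' ℓ, w (k - ℓ) * F ℓ := fun k => by
    rw [← (Equiv.subLeft k).tsum_eq]; simp [mul_comm]
  simp_rw [hcomm]
  exact ENNReal.tsum_sq_tsum_sub_mul_le w F

theorem ENNReal.tsum_sq_le_of_le_conv_add_conv {u c₁ F₁ G₁ F₂ c₂ G₂ : α → ℝ≥0∞} {A B : ℝ≥0∞}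
    (h : ∀ k, u k ≤ A * ∑' ℓ, c₁ (k - ℓ) * F₁ (k - ℓ) * G₁ ℓ +
      B * ∑' ℓ, F₂ (k - ℓ) * (c₂ ℓ * G₂ ℓ)) :
    ∑' k, u k ^ 2 ≤
      2 * (A ^ 2 * (∑' k, c₁ k ^ 2) * (∑' k, F₁ k ^ 2) * (∑' k, G₁ k ^ 2) +
        B ^ 2 * (∑' k, c₂ k ^ 2) * (∑' k, F₂ k ^ 2) * (∑' k, G₂ k ^ 2)) := by
  have h₁ : ∑' k, (∑' ℓ, c₁ (k - ℓ) * F₁ (k - ℓ) * G₁ ℓ) ^ 2 ≤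
      (∑' k, c₁ k ^ 2) * (∑' k, F₁ k ^ 2) * ∑' k, G₁ k ^ 2 :=
    (tsum_sq_tsum_sub_mul_le (fun m => c₁ m * F₁ m) G₁).trans
      (by gcongr; exact tsum_mul_sq_le_sq_mul_sq _ _)
  have h₂ : ∑' k, (∑' ℓ, F₂ (k - ℓ) * (c₂ ℓ * G₂ ℓ)) ^ 2 ≤
      (∑' k, c₂ k ^ 2) * (∑' k, F₂ k ^ 2) * ∑' k, G₂ k ^ 2 := by
    refine (tsum_sq_tsum_mul_sub_le F₂ (fun m => c₂ m * G₂ m)).trans ?_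
    rw [mul_right_comm]; gcongr; exact tsum_mul_sq_le_sq_mul_sq _ _
  calc ∑' k, u k ^ 2
      ≤ ∑' k, 2 * ((A * ∑' ℓ, c₁ (k - ℓ) * F₁ (k - ℓ) * G₁ ℓ) ^ 2 +
          (B * ∑' ℓ, F₂ (k - ℓ) * (c₂ ℓ * G₂ ℓ)) ^ 2) :=
        ENNReal.tsum_le_tsum fun k => (pow_le_pow_left' (h k) 2).trans (add_sq_le _ _)
    _ = 2 * (A ^ 2 * ∑' k, (∑' ℓ, c₁ (k - ℓ) * F₁ (k - ℓ) * G₁ ℓ) ^ 2 +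
          B ^ 2 * ∑' k, (∑' ℓ, F₂ (k - ℓ) * (c₂ ℓ * G₂ ℓ)) ^ 2) := by
        simp_rw [ENNReal.tsum_mul_left, ENNReal.tsum_add, mul_pow, ENNReal.tsum_mul_left]
    _ ≤ 2 * (A ^ 2 * ((∑' k, c₁ k ^ 2) * (∑' k, F₁ k ^ 2) * ∑' k, G₁ k ^ 2) +
          B ^ 2 * ((∑' k, c₂ k ^ 2) * (∑' k, F₂ k ^ 2) * ∑' k, G₂ k ^ 2)) := by gcongr
    _ = _ := by ring

end Convolution

section JapaneseBracket

theorem jap_sq (k : ℤ) : jap k ^ 2 = 1 + (k : ℝ) ^ 2 := Real.sq_sqrt (by positivity)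

theorem one_le_jap (k : ℤ) : 1 ≤ jap k := Real.one_le_sqrt.2 (by nlinarith)

theorem jap_pos (k : ℤ) : 0 < jap k := one_pos.trans_le (one_le_jap k)

theorem abs_le_jap (k : ℤ) : |(k : ℝ)| ≤ jap k := Real.abs_le_sqrt (by linarith)

theorem abs_jap_sub_jap_le (k ℓ : ℤ) : |jap k - jap ℓ| ≤ jap (k - ℓ) := by
  have hsum : |(k : ℝ) + ℓ| ≤ jap k + jap ℓ :=
    (abs_add_le _ _).trans (add_le_add (abs_le_jap k) (abs_le_jap ℓ))
  have hpos : 0 < jap k + jap ℓ := add_pos (jap_pos k) (jap_pos ℓ)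
  have hdiff : |jap k - jap ℓ| ≤ |(k : ℝ) - ℓ| := by
    refine le_of_mul_le_mul_right ?_ hpos
    calc |jap k - jap ℓ| * (jap k + jap ℓ) = |(k : ℝ) - ℓ| * |(k : ℝ) + ℓ| := by
          rw [← abs_of_pos hpos, ← abs_mul, ← abs_mul]
          congr 1
          linear_combination jap_sq k - jap_sq ℓ
      _ ≤ |(k : ℝ) - ℓ| * (jap k + jap ℓ) := by gcongr
  exact hdiff.trans (by simpa using abs_le_jap (k - ℓ))

theorem jap_le_jap_sub_add_jap (k ℓ : ℤ) : jap k ≤ jap (k - ℓ) + jap ℓ := by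
  linarith [le_abs_self (jap k - jap ℓ), abs_jap_sub_jap_le k ℓ]

theorem summable_jap_rpow_sq {a : ℝ} (ha : a < -1 / 2) :
    Summable fun k : ℤ => (jap k ^ a) ^ 2 := by
  refine Summable.of_norm_bounded_eventually (Real.summable_abs_int_rpow (b := -(2 * a))
    (by linarith)) ?_
  filter_upwards [(Set.finite_singleton (0 : ℤ)).compl_mem_cofinite] with k hk
  have hk : 0 < |(k : ℝ)| := by simpa using hk
  rw [neg_neg, Real.norm_of_nonneg (by positivity), ← Real.rpow_natCast,
    ← Real.rpow_mul (jap_pos k).le, mul_comm]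
  exact Real.rpow_le_rpow_of_nonpos hk (abs_le_jap k) (by push_cast; linarith)

end JapaneseBracket

section ExponentialWeight

variable {τ x y z : ℝ}

theorem abs_exp_sub_exp_le_exp_mul_exp (hτ : 0 ≤ τ) (hx : 0 ≤ x) (hy : 0 ≤ y) (hz : 0 ≤ z)
    (hxzy : x ≤ z + y) :
    |exp (τ * x ^ ((2 : ℝ) / 3)) - exp (τ * y ^ ((2 : ℝ) / 3))| ≤
      exp (τ * z ^ ((2 : ℝ) / 3)) * exp (τ * y ^ ((2 : ℝ) / 3)) := by
  refine (abs_exp_sub_exp_le_exp_max _ _).trans ?_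
  rw [← exp_add, exp_le_exp, ← mul_add]
  have hsub : x ^ ((2 : ℝ) / 3) ≤ z ^ ((2 : ℝ) / 3) + y ^ ((2 : ℝ) / 3) := calc
    x ^ ((2 : ℝ) / 3) ≤ (z + y) ^ ((2 : ℝ) / 3) := by gcongr
    _ ≤ _ := rpow_add_le_add_rpow hz hy (by norm_num) (by norm_num)
  refine max_le (by gcongr) (by gcongr; linarith [rpow_nonneg hz ((2 : ℝ) / 3)])

theorem abs_exp_sub_exp_mul_rpow_le (hτ : 0 ≤ τ) (hx : 0 < x) (hy : 0 < y) (hz : 0 ≤ z)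
    (hxy : |x - y| ≤ z) (hzy : z ≤ y) :
    |exp (τ * x ^ ((2 : ℝ) / 3)) - exp (τ * y ^ ((2 : ℝ) / 3))| * y ^ ((1 : ℝ) / 3) ≤
      3 * z ^ ((1 : ℝ) / 3) * (exp (τ * z ^ ((2 : ℝ) / 3)) * exp (τ * y ^ ((2 : ℝ) / 3))) := by
  set w := τ * z ^ ((2 : ℝ) / 3)
  have hdiff : |τ * x ^ ((2 : ℝ) / 3) - τ * y ^ ((2 : ℝ) / 3)| * y ^ ((1 : ℝ) / 3) ≤
      w * z ^ ((1 : ℝ) / 3) := by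
    have h := abs_rpow_sub_rpow_mul_rpow_le (p := (2 : ℝ) / 3) (by norm_num) (by norm_num) hx hy
    rw [show (1 : ℝ) - 2 / 3 = 1 / 3 by norm_num] at h
    rw [← mul_sub, abs_mul, abs_of_nonneg hτ, mul_assoc, mul_assoc,
      ← rpow_add' hz (by norm_num), show (2 : ℝ) / 3 + 1 / 3 = 1 by norm_num, rpow_one]
    gcongr
    exact h.trans hxy
  have hmax : max (τ * x ^ ((2 : ℝ) / 3)) (τ * y ^ ((2 : ℝ) / 3)) ≤
      τ * y ^ ((2 : ℝ) / 3) + 2 / 3 * w := by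
    have hx' : x ≤ z + y := by linarith [le_abs_self (x - y)]
    have hconc : x ^ ((2 : ℝ) / 3) ≤ y ^ ((2 : ℝ) / 3) + 2 / 3 * z ^ ((2 : ℝ) / 3) := calc
      x ^ ((2 : ℝ) / 3) ≤ (z + y) ^ ((2 : ℝ) / 3) := by gcongr
      _ ≤ _ := rpow_add_le_rpow_add_mul_rpow (by norm_num) (by norm_num) hz hzy
    refine max_le ?_ (by linarith [mul_nonneg hτ (rpow_nonneg hz ((2 : ℝ) / 3))])
    calc τ * x ^ ((2 : ℝ) / 3) ≤ τ * (y ^ ((2 : ℝ) / 3) + 2 / 3 * z ^ ((2 : ℝ) / 3)) := by gcongr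
      _ = _ := by ring
  calc |exp (τ * x ^ ((2 : ℝ) / 3)) - exp (τ * y ^ ((2 : ℝ) / 3))| * y ^ ((1 : ℝ) / 3)
      ≤ |τ * x ^ ((2 : ℝ) / 3) - τ * y ^ ((2 : ℝ) / 3)| * y ^ ((1 : ℝ) / 3) *
          exp (max (τ * x ^ ((2 : ℝ) / 3)) (τ * y ^ ((2 : ℝ) / 3))) := by
        rw [mul_right_comm]; gcongr; exact abs_exp_sub_exp_le_mul_exp_max _ _
    _ ≤ w * z ^ ((1 : ℝ) / 3) * exp (τ * y ^ ((2 : ℝ) / 3) + 2 / 3 * w) := by gcongr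
    _ = w * exp (2 / 3 * w) * z ^ ((1 : ℝ) / 3) * exp (τ * y ^ ((2 : ℝ) / 3)) := by
        rw [exp_add]; ring
    _ ≤ exp w / (1 - 2 / 3) * z ^ ((1 : ℝ) / 3) * exp (τ * y ^ ((2 : ℝ) / 3)) := by
        gcongr; exact mul_exp_mul_le_exp _ _ (by norm_num)
    _ = _ := by ring

end ExponentialWeight

noncomputable def gevreyWeight (τ : ℝ) (k : ℤ) : ℝ := exp (τ * jap k ^ ((2 : ℝ) / 3))

noncomputable def weightedNorm (τ a : ℝ) (h : ℤ → ℂ) (k : ℤ) : ℝ :=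
  jap k ^ a * gevreyWeight τ k * ‖h k‖

theorem weightedNorm_nonneg (τ a : ℝ) (h : ℤ → ℂ) (k : ℤ) : 0 ≤ weightedNorm τ a h k := by
  unfold weightedNorm gevreyWeight
  have := jap_pos k
  positivity

theorem Xnorm_eq (τ a : ℝ) (h : ℤ → ℂ) : Xnorm τ a h = √(∑' k, weightedNorm τ a h k ^ 2) := rfl

noncomputable def gevreyCommConst (r s₁ s : ℝ) : ℝ :=
  √2 * (3 * 2 ^ r) *
    (√(∑' m : ℤ, (jap m ^ ((1 : ℝ) / 3 - s₁)) ^ 2) + √(∑' m : ℤ, (jap m ^ (-s)) ^ 2))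

theorem gevreyCommConst_pos (r s₁ : ℝ) {s : ℝ} (hs : 1 / 2 < s) : 0 < gevreyCommConst r s₁ s := by
  have hγ₂ : 0 < √(∑' m : ℤ, (jap m ^ (-s)) ^ 2) :=
    sqrt_pos.2 <| (summable_jap_rpow_sq (by linarith)).tsum_pos (fun _ => sq_nonneg _) 0
      (pow_pos (rpow_pos_of_pos (jap_pos 0) _) 2)
  unfold gevreyCommConst
  positivity

section Commutator

variable {r s₁ s δ τ : ℝ}

theorem gevrey_commutator_symbol_le (hr : 0 ≤ r) (hδ1 : δ ≤ 1) (hτ : 0 ≤ τ)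
    (k ℓ : ℤ) :
    jap k ^ r * |gevreyWeight τ k - gevreyWeight τ ℓ| * |(ℓ : ℝ)| ≤
      3 * 2 ^ r * (jap (k - ℓ) ^ ((1 : ℝ) / 3) * gevreyWeight τ (k - ℓ)) *
          (jap ℓ ^ (r + 2 / 3) * gevreyWeight τ ℓ) +
        2 ^ r * (jap (k - ℓ) ^ (r + 1 - δ) * gevreyWeight τ (k - ℓ)) *
          (jap ℓ ^ δ * gevreyWeight τ ℓ) := by
  have hk := jap_le_jap_sub_add_jap k ℓ
  have hkl := jap_pos (k - ℓ)
  have hl := jap_pos ℓ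
  have hℓ := abs_le_jap ℓ
  unfold gevreyWeight
  rcases le_total (jap (k - ℓ)) (jap ℓ) with hlow | hhigh
  · refine le_add_of_le_of_nonneg ?_ (by positivity)
    have hsym := abs_exp_sub_exp_mul_rpow_le hτ (jap_pos k) hl hkl.le
      (abs_jap_sub_jap_le k ℓ) hlow
    calc jap k ^ r * |exp (τ * jap k ^ ((2 : ℝ) / 3)) - exp (τ * jap ℓ ^ ((2 : ℝ) / 3))| *
          |(ℓ : ℝ)|
        ≤ 2 ^ r * jap ℓ ^ r *
          |exp (τ * jap k ^ ((2 : ℝ) / 3)) - exp (τ * jap ℓ ^ ((2 : ℝ) / 3))| *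
            (jap ℓ ^ ((1 : ℝ) / 3) * jap ℓ ^ ((2 : ℝ) / 3)) := by
          rw [← rpow_add hl, show (1 : ℝ) / 3 + 2 / 3 = 1 by norm_num, rpow_one]
          gcongr
          exact rpow_le_two_rpow_mul_rpow (jap_pos k).le hr hk hlow
      _ = 2 ^ r * jap ℓ ^ (r + 2 / 3) *
          (|exp (τ * jap k ^ ((2 : ℝ) / 3)) - exp (τ * jap ℓ ^ ((2 : ℝ) / 3))| *
            jap ℓ ^ ((1 : ℝ) / 3)) := by
          rw [rpow_add hl]; ring
      _ ≤ 2 ^ r * jap ℓ ^ (r + 2 / 3) * (3 * jap (k - ℓ) ^ ((1 : ℝ) / 3) *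
          (exp (τ * jap (k - ℓ) ^ ((2 : ℝ) / 3)) * exp (τ * jap ℓ ^ ((2 : ℝ) / 3)))) := by
          gcongr
      _ = _ := by ring
  · refine le_add_of_nonneg_of_le (by positivity) ?_
    have hsym := abs_exp_sub_exp_le_exp_mul_exp hτ (jap_pos k).le hl.le hkl.le hk
    have hℓ' : |(ℓ : ℝ)| ≤ jap ℓ ^ δ * jap (k - ℓ) ^ (1 - δ) := calc
      |(ℓ : ℝ)| ≤ jap ℓ ^ δ * jap ℓ ^ (1 - δ) := by rw [← rpow_add hl]; simpa using hℓ
      _ ≤ _ := by gcongr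
    calc jap k ^ r * |exp (τ * jap k ^ ((2 : ℝ) / 3)) - exp (τ * jap ℓ ^ ((2 : ℝ) / 3))| *
          |(ℓ : ℝ)|
        ≤ 2 ^ r * jap (k - ℓ) ^ r *
          (exp (τ * jap (k - ℓ) ^ ((2 : ℝ) / 3)) * exp (τ * jap ℓ ^ ((2 : ℝ) / 3))) *
            (jap ℓ ^ δ * jap (k - ℓ) ^ (1 - δ)) := by
          gcongr
          exact rpow_le_two_rpow_mul_rpow (jap_pos k).le hr (by linarith) hhigh
      _ = _ := by rw [add_sub_assoc, rpow_add hkl]; ring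

theorem jap_rpow_mul_norm_commutator_term_le (hr : 0 ≤ r) (hδ1 : δ ≤ 1) (hτ : 0 ≤ τ)
    (f g : ℤ → ℂ) (k ℓ : ℤ) :
    jap k ^ r * ‖((gevreyWeight τ k - gevreyWeight τ ℓ : ℝ) : ℂ) * f (k - ℓ) *
        (Complex.I * (ℓ : ℂ)) * g ℓ‖ ≤
      3 * 2 ^ r * (jap (k - ℓ) ^ ((1 : ℝ) / 3 - s₁) * weightedNorm τ s₁ f (k - ℓ) *
          weightedNorm τ (r + 2 / 3) g ℓ) +
        2 ^ r * (weightedNorm τ (r + 1 - δ) f (k - ℓ) *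
          (jap ℓ ^ (-s) * weightedNorm τ (s + δ) g ℓ)) := by
  have h₁ : jap (k - ℓ) ^ ((1 : ℝ) / 3) = jap (k - ℓ) ^ ((1 : ℝ) / 3 - s₁) * jap (k - ℓ) ^ s₁ := by
    rw [← rpow_add (jap_pos _), sub_add_cancel]
  have h₂ : jap ℓ ^ δ = jap ℓ ^ (-s) * jap ℓ ^ (s + δ) := by
    rw [← rpow_add (jap_pos _), neg_add_cancel_left]
  simp only [norm_mul, Complex.norm_real, Complex.norm_I, Complex.norm_intCast, Real.norm_eq_abs,
    one_mul, weightedNorm]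
  calc _ = jap k ^ r * |gevreyWeight τ k - gevreyWeight τ ℓ| * |(ℓ : ℝ)| *
        (‖f (k - ℓ)‖ * ‖g ℓ‖) := by ring
    _ ≤ _ := mul_le_mul_of_nonneg_right (gevrey_commutator_symbol_le hr hδ1 hτ k ℓ)
        (by positivity)
    _ = _ := by rw [h₁, h₂]; ring

-- Bounding in `ℝ≥0∞` needs no summability of the convolutions on the right.
theorem ofReal_jap_rpow_mul_norm_gevreyCommCoef_le (hr : 0 ≤ r) (hδ1 : δ ≤ 1) (hτ : 0 ≤ τ)
    (f g : ℤ → ℂ) (k : ℤ) :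
    ENNReal.ofReal (jap k ^ r * ‖gevreyCommCoef τ f g k‖) ≤
      ENNReal.ofReal (3 * 2 ^ r) * ∑' ℓ, ENNReal.ofReal (jap (k - ℓ) ^ ((1 : ℝ) / 3 - s₁)) *
          ENNReal.ofReal (weightedNorm τ s₁ f (k - ℓ)) *
          ENNReal.ofReal (weightedNorm τ (r + 2 / 3) g ℓ) +
        ENNReal.ofReal (2 ^ r) * ∑' ℓ, ENNReal.ofReal (weightedNorm τ (r + 1 - δ) f (k - ℓ)) *
          (ENNReal.ofReal (jap ℓ ^ (-s)) * ENNReal.ofReal (weightedNorm τ (s + δ) g ℓ)) := by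
  have hw := weightedNorm_nonneg τ
  have hj : ∀ (a : ℝ) (m : ℤ), 0 ≤ jap m ^ a := fun a m => rpow_nonneg (jap_pos m).le a
  rw [← ENNReal.tsum_mul_left, ← ENNReal.tsum_mul_left, ← ENNReal.tsum_add,
    ENNReal.ofReal_mul (hj r k), ofReal_norm, gevreyCommCoef]
  refine (mul_le_mul_right enorm_tsum_le_tsum_enorm _).trans ?_
  rw [← ENNReal.tsum_mul_left]
  refine ENNReal.tsum_le_tsum fun ℓ => ?_
  rw [← ofReal_norm, ← ENNReal.ofReal_mul (hj r k)]
  refine (ENNReal.ofReal_le_ofReal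
    (jap_rpow_mul_norm_commutator_term_le (s₁ := s₁) (s := s) hr hδ1 hτ f g k ℓ)).trans ?_
  refine ENNReal.ofReal_add_le.trans_eq ?_
  rw [ENNReal.ofReal_mul (p := 3 * 2 ^ r) (by positivity),
    ENNReal.ofReal_mul (mul_nonneg (hj _ _) (hw _ _ _)), ENNReal.ofReal_mul (hj _ _),
    ENNReal.ofReal_mul (p := 2 ^ r) (by positivity), ENNReal.ofReal_mul (hw _ _ _),
    ENNReal.ofReal_mul (hj _ _)]

theorem tsum_sq_jap_rpow_mul_norm_gevreyCommCoef_le (hr : 0 ≤ r) (hs₁ : 5 / 6 < s₁)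
    (hs : 1 / 2 < s) (hδ1 : δ ≤ 1) (hτ : 0 ≤ τ) {f g : ℤ → ℂ}
    (hf₁ : Summable fun k => weightedNorm τ s₁ f k ^ 2)
    (hf₂ : Summable fun k => weightedNorm τ (r + 1 - δ) f k ^ 2)
    (hg₁ : Summable fun k => weightedNorm τ (r + 2 / 3) g k ^ 2)
    (hg₂ : Summable fun k => weightedNorm τ (s + δ) g k ^ 2) :
    ∑' k, (jap k ^ r * ‖gevreyCommCoef τ f g k‖) ^ 2 ≤
      2 * ((3 * 2 ^ r * √(∑' m : ℤ, (jap m ^ ((1 : ℝ) / 3 - s₁)) ^ 2) *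
            Xnorm τ s₁ f * Xnorm τ (r + 2 / 3) g) ^ 2 +
          (2 ^ r * √(∑' m : ℤ, (jap m ^ (-s)) ^ 2) *
            Xnorm τ (r + 1 - δ) f * Xnorm τ (s + δ) g) ^ 2) := by
  have hj : ∀ (a : ℝ) (m : ℤ), 0 ≤ jap m ^ a := fun a m => rpow_nonneg (jap_pos m).le a
  have hw := weightedNorm_nonneg τ
  have key := ENNReal.tsum_sq_le_of_le_conv_add_conv
    (c₁ := fun m => ENNReal.ofReal (jap m ^ ((1 : ℝ) / 3 - s₁)))
    (F₁ := fun m => ENNReal.ofReal (weightedNorm τ s₁ f m))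
    (G₁ := fun m => ENNReal.ofReal (weightedNorm τ (r + 2 / 3) g m))
    (F₂ := fun m => ENNReal.ofReal (weightedNorm τ (r + 1 - δ) f m))
    (c₂ := fun m => ENNReal.ofReal (jap m ^ (-s)))
    (G₂ := fun m => ENNReal.ofReal (weightedNorm τ (s + δ) g m))
    (ofReal_jap_rpow_mul_norm_gevreyCommCoef_le hr hδ1 hτ f g)
  beta_reduce at key
  rw [ENNReal.tsum_ofReal_sq (hj _) (summable_jap_rpow_sq (by linarith)),
    ENNReal.tsum_ofReal_sq (hj _) (summable_jap_rpow_sq (by linarith)),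
    ENNReal.tsum_ofReal_sq (hw _ _) hf₁, ENNReal.tsum_ofReal_sq (hw _ _) hf₂,
    ENNReal.tsum_ofReal_sq (hw _ _) hg₁, ENNReal.tsum_ofReal_sq (hw _ _) hg₂] at key
  have hreal := ENNReal.toReal_mono (by finiteness) key
  rw [ENNReal.toReal_tsum_ofReal_sq (fun k => mul_nonneg (hj _ _) (norm_nonneg _)),
    ENNReal.toReal_mul, ENNReal.toReal_add (by finiteness) (by finiteness)] at hreal
  simp (disch := positivity) only [ENNReal.toReal_mul, ENNReal.toReal_pow,
    ENNReal.toReal_ofReal, ENNReal.toReal_ofNat] at hreal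
  simp only [← Xnorm_eq] at hreal
  exact hreal.trans_eq (by ring)

theorem sqrt_tsum_sq_jap_rpow_mul_norm_gevreyCommCoef_le (hr : 0 ≤ r) (hs₁ : 5 / 6 < s₁)
    (hs : 1 / 2 < s) (hδ1 : δ ≤ 1) (hτ : 0 ≤ τ) {f g : ℤ → ℂ}
    (hf₁ : Summable fun k => weightedNorm τ s₁ f k ^ 2)
    (hf₂ : Summable fun k => weightedNorm τ (r + 1 - δ) f k ^ 2)
    (hg₁ : Summable fun k => weightedNorm τ (r + 2 / 3) g k ^ 2)
    (hg₂ : Summable fun k => weightedNorm τ (s + δ) g k ^ 2) :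
    √(∑' k, (jap k ^ r * ‖gevreyCommCoef τ f g k‖) ^ 2) ≤
      gevreyCommConst r s₁ s * Xnorm τ s₁ f * Xnorm τ (r + 2 / 3) g +
        gevreyCommConst r s₁ s * Xnorm τ (r + 1 - δ) f * Xnorm τ (s + δ) g := by
  have hS := tsum_sq_jap_rpow_mul_norm_gevreyCommCoef_le hr hs₁ hs hδ1 hτ hf₁ hf₂ hg₁ hg₂
  unfold gevreyCommConst
  set γ₁ := √(∑' m : ℤ, (jap m ^ ((1 : ℝ) / 3 - s₁)) ^ 2)
  set γ₂ := √(∑' m : ℤ, (jap m ^ (-s)) ^ 2)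
  have hX₁ : 0 ≤ Xnorm τ s₁ f := sqrt_nonneg _
  have hX₂ : 0 ≤ Xnorm τ (r + 1 - δ) f := sqrt_nonneg _
  have hY₁ : 0 ≤ Xnorm τ (r + 2 / 3) g := sqrt_nonneg _
  have hY₂ : 0 ≤ Xnorm τ (s + δ) g := sqrt_nonneg _
  refine (sqrt_le_sqrt_two_mul_add (by positivity) (by positivity) hS).trans ?_
  have : 0 ≤ √2 * 2 ^ r * (3 * γ₂ * Xnorm τ s₁ f * Xnorm τ (r + 2 / 3) g +
      (3 * γ₁ + 2 * γ₂) * Xnorm τ (r + 1 - δ) f * Xnorm τ (s + δ) g) := by positivity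
  linarith

end Commutator

theorem gevrey_commutator_estimate_general (r s₁ s δ : ℝ)
    (hr : 0 ≤ r) (hs₁ : 3 / 2 < s₁) (hs : 1 / 2 < s) (hδ1 : δ ≤ 1) :
    ∃ C : ℝ, 0 < C ∧ ∀ (τ : ℝ), 0 ≤ τ → ∀ f g : ℤ → ℂ,
      Summable (fun k : ℤ =>
        (jap k ^ s₁ * Real.exp (τ * jap k ^ ((2 : ℝ) / 3)) * ‖f k‖) ^ 2) →
      Summable (fun k : ℤ =>
        (jap k ^ (r + 1 - δ) * Real.exp (τ * jap k ^ ((2 : ℝ) / 3)) * ‖f k‖) ^ 2) →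
      Summable (fun k : ℤ =>
        (jap k ^ (r + 2 / 3) * Real.exp (τ * jap k ^ ((2 : ℝ) / 3)) * ‖g k‖) ^ 2) →
      Summable (fun k : ℤ =>
        (jap k ^ (s + δ) * Real.exp (τ * jap k ^ ((2 : ℝ) / 3)) * ‖g k‖) ^ 2) →
      (∀ k : ℤ, Summable (fun ℓ : ℤ =>
        ((Real.exp (τ * jap k ^ ((2 : ℝ) / 3)) -
            Real.exp (τ * jap ℓ ^ ((2 : ℝ) / 3)) : ℝ) : ℂ) *
          f (k - ℓ) * (Complex.I * (ℓ : ℂ)) * g ℓ)) →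
      Real.sqrt (∑' k : ℤ, (jap k ^ r * ‖gevreyCommCoef τ f g k‖) ^ 2) ≤
        C * Xnorm τ s₁ f * Xnorm τ (r + 2 / 3) g +
          C * Xnorm τ (r + 1 - δ) f * Xnorm τ (s + δ) g := by
  exact ⟨gevreyCommConst r s₁ s, gevreyCommConst_pos r s₁ hs, fun τ hτ f g hf₁ hf₂ hg₁ hg₂ _ =>
    sqrt_tsum_sq_jap_rpow_mul_norm_gevreyCommCoef_le hr (by linarith) hs hδ1 hτ hf₁ hf₂ hg₁ hg₂⟩

/-- Gevrey commutator estimate: for `r ≥ 0`, `s₁ > 3/2`, `s > 1/2`, `0 ≤ δ ≤ 1`,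
`‖(f∂_x g)_Φ − f∂_x g_Φ‖_{H^r} ≤ C|f|_{X^{s₁}}|g|_{X^{r+2/3}}
  + C|f|_{X^{r+1-δ}}|g|_{X^{s+δ}}`. -/
theorem gevrey_commutator_estimate (r s₁ s δ : ℝ)
    (hr : 0 ≤ r) (hs₁ : 3 / 2 < s₁) (hs : 1 / 2 < s) (hδ0 : 0 ≤ δ) (hδ1 : δ ≤ 1) :
    ∃ C : ℝ, 0 < C ∧ ∀ (τ : ℝ), 0 ≤ τ → ∀ f g : ℤ → ℂ,
      Summable (fun k : ℤ =>
        (jap k ^ s₁ * Real.exp (τ * jap k ^ ((2 : ℝ) / 3)) * ‖f k‖) ^ 2) →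
      Summable (fun k : ℤ =>
        (jap k ^ (r + 1 - δ) * Real.exp (τ * jap k ^ ((2 : ℝ) / 3)) * ‖f k‖) ^ 2) →
      Summable (fun k : ℤ =>
        (jap k ^ (r + 2 / 3) * Real.exp (τ * jap k ^ ((2 : ℝ) / 3)) * ‖g k‖) ^ 2) →
      Summable (fun k : ℤ =>
        (jap k ^ (s + δ) * Real.exp (τ * jap k ^ ((2 : ℝ) / 3)) * ‖g k‖) ^ 2) →
      (∀ k : ℤ, Summable (fun ℓ : ℤ =>
        ((Real.exp (τ * jap k ^ ((2 : ℝ) / 3)) -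
            Real.exp (τ * jap ℓ ^ ((2 : ℝ) / 3)) : ℝ) : ℂ) *
          f (k - ℓ) * (Complex.I * (ℓ : ℂ)) * g ℓ)) →
      Real.sqrt (∑' k : ℤ, (jap k ^ r * ‖gevreyCommCoef τ f g k‖) ^ 2) ≤
        C * Xnorm τ s₁ f * Xnorm τ (r + 2 / 3) g +
          C * Xnorm τ (r + 1 - δ) f * Xnorm τ (s + δ) g :=
  gevrey_commutator_estimate_general r s₁ s δ hr hs₁ hs hδ1
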